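/- For each j ∈ {1,2,3,4}, the conjugated matrix A = B⁻¹·T_j·B is orthogonal (Aᵀ·A = I₈) and preserves the standard hyperKähler triple: Aᵀ·Ω_k·A = Ω_k for k = 1, 2, 3. Hence the conjugated group B⁻¹·G₂·B lies in Sp(2) ⊂ SO(8), i.e. the group G₂ preserves a hyperKähler structure on ℝ⁸. -/

import Mathlib

open Matrix

/-- The generator `T1`. -/
noncomputable def T1 : Matrix (Fin 8) (Fin 8) ℝ :=
  (1/2 : ℝ) • !![
    1, 1, 0, 0, -1, 1, 0, 0;
    -1, 1, 0, 0, -1, -1, 0, 0;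
    0, 0, 1, -1, 0, 0, 1, 1;
    0, 0, 1, 1, 0, 0, 1, -1;
    1, 1, 0, 0, 1, -1, 0, 0;
    -1, 1, 0, 0, 1, 1, 0, 0;
    0, 0, -1, -1, 0, 0, 1, -1;
    0, 0, -1, 1, 0, 0, 1, 1]

/-- The generator `T2`. -/
noncomputable def T2 : Matrix (Fin 8) (Fin 8) ℝ :=
  (1/2 : ℝ) • !![
    1, 1, 0, 0, 1, 1, 0, 0;
    -1, 1, 0, 0, -1, 1, 0, 0;
    0, 0, 1, -1, 0, 0, 1, -1;
    0, 0, 1, 1, 0, 0, -1, -1;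
    -1, 1, 0, 0, 1, -1, 0, 0;
    -1, -1, 0, 0, 1, 1, 0, 0;
    0, 0, -1, 1, 0, 0, 1, -1;
    0, 0, 1, 1, 0, 0, 1, 1]

/-- The generator `T3`. -/
noncomputable def T3 : Matrix (Fin 8) (Fin 8) ℝ :=
  (1/2 : ℝ) • !![
    1, 1, -1, 1, 0, 0, 0, 0;
    -1, 1, 0, 0, 0, 0, 1, -1;
    1, 0, 1, 0, 1, 0, 0, -1;
    -1, 0, 0, 1, 1, 0, -1, 0;
    0, 0, -1, -1, 1, -1, 0, 0;
    0, 0, 0, 0, 1, 1, 1, 1;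
    0, -1, 0, 1, 0, -1, 1, 0;
    0, 1, 1, 0, 0, -1, 0, 1]

/-- The generator `T4`. -/
noncomputable def T4 : Matrix (Fin 8) (Fin 8) ℝ :=
  (1/2 : ℝ) • !![
    1, 0, -1, 0, 0, 1, -1, 0;
    0, 1, 0, 1, 1, 0, 0, -1;
    1, 0, 1, 0, 1, 0, 0, 1;
    0, -1, 0, 1, 0, -1, -1, 0;
    0, -1, -1, 0, 1, 0, 1, 0;
    -1, 0, 0, 1, 0, 1, 0, 1;
    1, 0, 0, 1, -1, 0, 1, 0;
    0, 1, -1, 0, 0, -1, 0, 1]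

/-- The basis-change matrix `B⁽²⁾` of Appendix C. -/
noncomputable def B : Matrix (Fin 8) (Fin 8) ℝ :=
  !![
    -1/Real.sqrt 6, 0, 0, -1/Real.sqrt 2, 0, 0, 0, 1/Real.sqrt 3;
    0, 0, 0, 0, -1, 0, 0, 0;
    0, 0, -Real.sqrt (2/3), 0, 0, -1/Real.sqrt 3, 0, 0;
    0, -1/Real.sqrt 2, 1/Real.sqrt 6, 0, 0, -1/Real.sqrt 3, 0, 0;
    0, 0, 0, 0, 0, 0, 1, 0;
    0, 1/Real.sqrt 2, 1/Real.sqrt 6, 0, 0, -1/Real.sqrt 3, 0, 0;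
    1/Real.sqrt 6, 0, 0, -1/Real.sqrt 2, 0, 0, 0, -1/Real.sqrt 3;
    Real.sqrt (2/3), 0, 0, 0, 0, 0, 0, 1/Real.sqrt 3]

/-- The Kähler form `ω1` of the standard hyperKähler triple on ℝ⁸, as a matrix. -/
def Omega1 : Matrix (Fin 8) (Fin 8) ℝ :=
  !![
    0, 1, 0, 0, 0, 0, 0, 0;
    -1, 0, 0, 0, 0, 0, 0, 0;
    0, 0, 0, 1, 0, 0, 0, 0;
    0, 0, -1, 0, 0, 0, 0, 0;
    0, 0, 0, 0, 0, 1, 0, 0;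
    0, 0, 0, 0, -1, 0, 0, 0;
    0, 0, 0, 0, 0, 0, 0, 1;
    0, 0, 0, 0, 0, 0, -1, 0]

/-- The Kähler form `ω2` of the standard hyperKähler triple on ℝ⁸, as a matrix. -/
def Omega2 : Matrix (Fin 8) (Fin 8) ℝ :=
  !![
    0, 0, 1, 0, 0, 0, 0, 0;
    0, 0, 0, -1, 0, 0, 0, 0;
    -1, 0, 0, 0, 0, 0, 0, 0;
    0, 1, 0, 0, 0, 0, 0, 0;
    0, 0, 0, 0, 0, 0, 1, 0;
    0, 0, 0, 0, 0, 0, 0, -1;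
    0, 0, 0, 0, -1, 0, 0, 0;
    0, 0, 0, 0, 0, 1, 0, 0]

/-- The Kähler form `ω3` of the standard hyperKähler triple on ℝ⁸, as a matrix. -/
def Omega3 : Matrix (Fin 8) (Fin 8) ℝ :=
  !![
    0, 0, 0, 1, 0, 0, 0, 0;
    0, 0, 1, 0, 0, 0, 0, 0;
    0, -1, 0, 0, 0, 0, 0, 0;
    -1, 0, 0, 0, 0, 0, 0, 0;
    0, 0, 0, 0, 0, 0, 0, 1;
    0, 0, 0, 0, 0, 0, 1, 0;
    0, 0, 0, 0, 0, -1, 0, 0;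
    0, 0, 0, 0, -1, 0, 0, 0]

namespace HK

/-- Integer part of the basis change. -/
def C : Matrix (Fin 8) (Fin 8) ℝ :=
  !![
    -1, 0, 0, -1, 0, 0, 0, 1;
    0, 0, 0, 0, -1, 0, 0, 0;
    0, 0, -2, 0, 0, -1, 0, 0;
    0, -1, 1, 0, 0, -1, 0, 0;
    0, 0, 0, 0, 0, 0, 1, 0;
    0, 1, 1, 0, 0, -1, 0, 0;
    1, 0, 0, -1, 0, 0, 0, -1;
    2, 0, 0, 0, 0, 0, 0, 1]

noncomputable def dv : Fin 8 → ℝ :=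
  ![1/Real.sqrt 6, 1/Real.sqrt 2, 1/Real.sqrt 6, 1/Real.sqrt 2, 1, 1/Real.sqrt 3, 1, 1/Real.sqrt 3]

noncomputable def dv2 : Fin 8 → ℝ := ![1/6, 1/2, 1/6, 1/2, 1, 1/3, 1, 1/3]

noncomputable def C2 : Matrix (Fin 8) (Fin 8) ℝ :=
  !![
    -1/6, 0, 0, -1/2, 0, 0, 0, 1/3;
    0, 0, 0, 0, -1, 0, 0, 0;
    0, 0, -1/3, 0, 0, -1/3, 0, 0;
    0, -1/2, 1/6, 0, 0, -1/3, 0, 0;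
    0, 0, 0, 0, 0, 0, 1, 0;
    0, 1/2, 1/6, 0, 0, -1/3, 0, 0;
    1/6, 0, 0, -1/2, 0, 0, 0, -1/3;
    1/3, 0, 0, 0, 0, 0, 0, 1/3]

noncomputable def E1 : Matrix (Fin 8) (Fin 8) ℝ :=
  !![
    0, 1/6, 0, 0, 0, 0, 0, 0;
    -1/6, 0, 0, 0, 0, 0, 0, 0;
    0, 0, 0, 1/6, 0, 0, 0, 0;
    0, 0, -1/6, 0, 0, 0, 0, 0;
    0, 0, 0, 0, 0, 1/3, 0, 0;
    0, 0, 0, 0, -1/3, 0, 0, 0;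
    0, 0, 0, 0, 0, 0, 0, 1/3;
    0, 0, 0, 0, 0, 0, -1/3, 0]

noncomputable def E2 : Matrix (Fin 8) (Fin 8) ℝ :=
  !![
    0, 0, 1/6, 0, 0, 0, 0, 0;
    0, 0, 0, -1/2, 0, 0, 0, 0;
    -1/6, 0, 0, 0, 0, 0, 0, 0;
    0, 1/2, 0, 0, 0, 0, 0, 0;
    0, 0, 0, 0, 0, 0, 1, 0;
    0, 0, 0, 0, 0, 0, 0, -1/3;
    0, 0, 0, 0, -1, 0, 0, 0;
    0, 0, 0, 0, 0, 1/3, 0, 0]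

noncomputable def E3 : Matrix (Fin 8) (Fin 8) ℝ :=
  !![
    0, 0, 0, 1/6, 0, 0, 0, 0;
    0, 0, 1/6, 0, 0, 0, 0, 0;
    0, -1/6, 0, 0, 0, 0, 0, 0;
    -1/6, 0, 0, 0, 0, 0, 0, 0;
    0, 0, 0, 0, 0, 0, 0, 1/3;
    0, 0, 0, 0, 0, 0, 1/3, 0;
    0, 0, 0, 0, 0, -1/3, 0, 0;
    0, 0, 0, 0, -1/3, 0, 0, 0]

noncomputable def F1 : Matrix (Fin 8) (Fin 8) ℝ :=
  !![
    0, -1/6, 1/6, 0, 0, 0, -1/3, 0;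
    0, 0, 0, 0, 0, -1/3, 0, 0;
    0, 0, 0, -1/3, 1/3, 0, 0, 0;
    1/6, 0, 0, 1/6, 1/3, 0, 0, 0;
    0, 0, 0, 0, 0, 0, 0, 1/3;
    -1/6, 0, 0, 1/6, 1/3, 0, 0, 0;
    0, 1/6, 1/6, 0, 0, 0, 1/3, 0;
    0, 1/3, 0, 0, 0, 0, -1/3, 0]

noncomputable def F2 : Matrix (Fin 8) (Fin 8) ℝ :=
  !![
    0, -1/2, -1/6, 0, 0, 1/3, 0, 0;
    0, 0, 0, 0, 0, 0, -1, 0;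
    1/3, 0, 0, 0, 0, 0, 0, 1/3;
    -1/6, 0, 0, 1/2, 0, 0, 0, 1/3;
    0, 0, 0, 0, -1, 0, 0, 0;
    -1/6, 0, 0, -1/2, 0, 0, 0, 1/3;
    0, -1/2, 1/6, 0, 0, -1/3, 0, 0;
    0, 0, 1/3, 0, 0, 1/3, 0, 0]

noncomputable def F3 : Matrix (Fin 8) (Fin 8) ℝ :=
  !![
    1/6, 0, 0, -1/6, -1/3, 0, 0, 0;
    0, 0, 0, 0, 0, 0, 0, -1/3;
    0, 1/3, 0, 0, 0, 0, -1/3, 0;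
    0, -1/6, -1/6, 0, 0, 0, -1/3, 0;
    0, 0, 0, 0, 0, -1/3, 0, 0;
    0, -1/6, 1/6, 0, 0, 0, -1/3, 0;
    1/6, 0, 0, 1/6, 1/3, 0, 0, 0;
    0, 0, 0, 1/3, -1/3, 0, 0, 0]

noncomputable def Q1 : Matrix (Fin 8) (Fin 8) ℝ :=
  !![
    0, 0, -1/3, 1/3, -1/3, 0, 0, 0;
    0, 0, 1/3, 1/3, 0, 1/3, 0, 0;
    1/3, -1/3, 0, 0, 0, 0, 1/3, 0;
    -1/3, -1/3, 0, 0, 0, 0, 0, 1/3;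
    1/3, 0, 0, 0, 0, 0, -1/3, 1/3;
    0, -1/3, 0, 0, 0, 0, -1/3, -1/3;
    0, 0, -1/3, 0, 1/3, 1/3, 0, 0;
    0, 0, 0, -1/3, -1/3, 1/3, 0, 0]

noncomputable def Q2 : Matrix (Fin 8) (Fin 8) ℝ :=
  !![
    0, 0, 0, 0, 0, -1, 0, 0;
    0, 0, 0, 0, -1, 0, 0, 0;
    0, 0, 0, 0, 0, 0, 0, 1;
    0, 0, 0, 0, 0, 0, -1, 0;
    0, 1, 0, 0, 0, 0, 0, 0;
    1, 0, 0, 0, 0, 0, 0, 0;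
    0, 0, 0, 1, 0, 0, 0, 0;
    0, 0, -1, 0, 0, 0, 0, 0]

noncomputable def Q3 : Matrix (Fin 8) (Fin 8) ℝ :=
  !![
    0, 1/3, 0, 0, 0, 0, 1/3, 1/3;
    -1/3, 0, 0, 0, 0, 0, 1/3, -1/3;
    0, 0, 0, -1/3, -1/3, 1/3, 0, 0;
    0, 0, 1/3, 0, -1/3, -1/3, 0, 0;
    0, 0, 1/3, 1/3, 0, 1/3, 0, 0;
    0, 0, -1/3, 1/3, -1/3, 0, 0, 0;
    -1/3, -1/3, 0, 0, 0, 0, 0, 1/3;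
    -1/3, 1/3, 0, 0, 0, 0, -1/3, 0]

end HK

namespace HKAux

open Matrix

section VecLemmas
variable {α : Type*} (a b c d e f g h : α)
lemma vm0 (hp : 0 < 8) : ![a,b,c,d,e,f,g,h] ⟨0,hp⟩ = a := rfl
lemma vm1 (hp : 1 < 8) : ![a,b,c,d,e,f,g,h] ⟨1,hp⟩ = b := rfl
lemma vm2 (hp : 2 < 8) : ![a,b,c,d,e,f,g,h] ⟨2,hp⟩ = c := rfl
lemma vm3 (hp : 3 < 8) : ![a,b,c,d,e,f,g,h] ⟨3,hp⟩ = d := rfl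
lemma vm4 (hp : 4 < 8) : ![a,b,c,d,e,f,g,h] ⟨4,hp⟩ = e := rfl
lemma vm5 (hp : 5 < 8) : ![a,b,c,d,e,f,g,h] ⟨5,hp⟩ = f := rfl
lemma vm6 (hp : 6 < 8) : ![a,b,c,d,e,f,g,h] ⟨6,hp⟩ = g := rfl
lemma vm7 (hp : 7 < 8) : ![a,b,c,d,e,f,g,h] ⟨7,hp⟩ = h := rfl
lemma vn0 : ![a,b,c,d,e,f,g,h] (0 : Fin 8) = a := rfl
lemma vn1 : ![a,b,c,d,e,f,g,h] (1 : Fin 8) = b := rfl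
lemma vn2 : ![a,b,c,d,e,f,g,h] (2 : Fin 8) = c := rfl
lemma vn3 : ![a,b,c,d,e,f,g,h] (3 : Fin 8) = d := rfl
lemma vn4 : ![a,b,c,d,e,f,g,h] (4 : Fin 8) = e := rfl
lemma vn5 : ![a,b,c,d,e,f,g,h] (5 : Fin 8) = f := rfl
lemma vn6 : ![a,b,c,d,e,f,g,h] (6 : Fin 8) = g := rfl
lemma vn7 : ![a,b,c,d,e,f,g,h] (7 : Fin 8) = h := rfl
end VecLemmas

lemma h2 : Real.sqrt 2 * Real.sqrt 2 = 2 := Real.mul_self_sqrt (by norm_num)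
lemma h3 : Real.sqrt 3 * Real.sqrt 3 = 3 := Real.mul_self_sqrt (by norm_num)
lemma h6 : Real.sqrt 6 * Real.sqrt 6 = 6 := Real.mul_self_sqrt (by norm_num)
lemma m62 : Real.sqrt 6 * Real.sqrt 2 = 2 * Real.sqrt 3 := by
  rw [← Real.sqrt_mul (by norm_num : (0:ℝ) ≤ 6)]
  rw [show (6*2:ℝ) = 2^2*3 by norm_num, Real.sqrt_mul (by positivity), Real.sqrt_sq (by norm_num)]
lemma e23 : Real.sqrt (2/3) = 2 * (1/Real.sqrt 6) := by
  have h6' : Real.sqrt 6 ≠ 0 := by positivity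
  rw [mul_one_div, eq_div_iff h6', ← Real.sqrt_mul (by norm_num : (0:ℝ) ≤ 2/3)]
  norm_num

lemma m26 : Real.sqrt 2 * Real.sqrt 6 = 2 * Real.sqrt 3 := by rw [mul_comm]; exact m62
lemma m63 : Real.sqrt 6 * Real.sqrt 3 = 3 * Real.sqrt 2 := by
  rw [← Real.sqrt_mul (by norm_num : (0:ℝ) ≤ 6)]
  rw [show (6*3:ℝ) = 3^2*2 by norm_num, Real.sqrt_mul (by positivity), Real.sqrt_sq (by norm_num)]
lemma m36 : Real.sqrt 3 * Real.sqrt 6 = 3 * Real.sqrt 2 := by rw [mul_comm]; exact m63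
lemma m23 : Real.sqrt 2 * Real.sqrt 3 = Real.sqrt 6 := by
  rw [← Real.sqrt_mul (by norm_num : (0:ℝ) ≤ 2)]; norm_num
lemma m32 : Real.sqrt 3 * Real.sqrt 2 = Real.sqrt 6 := by rw [mul_comm]; exact m23
lemma h23d : Real.sqrt (2/3) * Real.sqrt 6 = 2 := by
  rw [← Real.sqrt_mul (by norm_num : (0:ℝ) ≤ 2/3)]
  rw [show (2/3*6:ℝ) = 2^2 by norm_num, Real.sqrt_sq (by norm_num)]
lemma h23q : Real.sqrt (2/3) * Real.sqrt (2/3) = 2/3 := Real.mul_self_sqrt (by norm_num)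

noncomputable def D : Matrix (Fin 8) (Fin 8) ℝ := Matrix.diagonal HK.dv

set_option maxHeartbeats 4000000 in
lemma hBCD : B = HK.C * D := by
  have n2 : Real.sqrt 2 ≠ 0 := by positivity
  have n3 : Real.sqrt 3 ≠ 0 := by positivity
  have n6 : Real.sqrt 6 ≠ 0 := by positivity
  ext i j
  rw [D, Matrix.mul_diagonal]
  fin_cases i <;> fin_cases j <;>
    simp only [B, HK.C, HK.dv, Matrix.of_apply,
      vm0,vm1,vm2,vm3,vm4,vm5,vm6,vm7,vn0,vn1,vn2,vn3,vn4,vn5,vn6,vn7] <;>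
    (try norm_num) <;> (try field_simp) <;> nlinarith [h2, h3, h6, m62, m26, m63, m36, m23, m32, h23d, h23q]

lemma hDD : D * D = Matrix.diagonal HK.dv2 := by
  have n2 : Real.sqrt 2 ≠ 0 := by positivity
  have n3 : Real.sqrt 3 ≠ 0 := by positivity
  have n6 : Real.sqrt 6 ≠ 0 := by positivity
  have key : HK.dv * HK.dv = HK.dv2 := by
    funext i
    fin_cases i <;>
      simp only [HK.dv, HK.dv2, Pi.mul_apply,
        vm0,vm1,vm2,vm3,vm4,vm5,vm6,vm7,vn0,vn1,vn2,vn3,vn4,vn5,vn6,vn7] <;>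
      (try norm_num) <;> (try field_simp) <;> nlinarith [h2, h3, h6, m62, m26, m63, m36, m23, m32, h23d, h23q]
  have key2 : (fun i => HK.dv i * HK.dv i) = HK.dv2 := funext fun i => congrFun key i
  rw [D, Matrix.diagonal_mul_diagonal, key2]

set_option maxHeartbeats 4000000 in
lemma hCD2 : HK.C * Matrix.diagonal HK.dv2 = HK.C2 := by
  ext i j
  rw [Matrix.mul_diagonal]
  fin_cases i <;> fin_cases j <;>
    simp only [HK.C, HK.C2, HK.dv2, Matrix.of_apply,
      vm0,vm1,vm2,vm3,vm4,vm5,vm6,vm7,vn0,vn1,vn2,vn3,vn4,vn5,vn6,vn7] <;>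
    norm_num

set_option maxHeartbeats 4000000 in
lemma hC2Ct : HK.C2 * HK.Cᵀ = 1 := by
  ext i j
  simp only [Matrix.mul_apply, Matrix.transpose_apply, Fin.sum_univ_eight]
  fin_cases i <;> fin_cases j <;>
    simp only [HK.C, HK.C2, Matrix.of_apply,
      vm0,vm1,vm2,vm3,vm4,vm5,vm6,vm7,vn0,vn1,vn2,vn3,vn4,vn5,vn6,vn7] <;>
    norm_num [Matrix.one_apply, Fin.ext_iff]

lemma hBBt : B * Bᵀ = 1 := by
  rw [hBCD, Matrix.transpose_mul, D, Matrix.diagonal_transpose, ← D]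
  calc HK.C * D * (D * HK.Cᵀ) = HK.C * (D * D) * HK.Cᵀ := by
        simp only [Matrix.mul_assoc]
    _ = 1 := by rw [hDD, hCD2, hC2Ct]

lemma hBtB : Bᵀ * B = 1 := mul_eq_one_comm.mp hBBt

set_option maxHeartbeats 4000000 in
lemma hDOD1 : D * Omega1 * D = Real.sqrt 3 • HK.E1 := by
  have n2 : Real.sqrt 2 ≠ 0 := by positivity
  have n3 : Real.sqrt 3 ≠ 0 := by positivity
  have n6 : Real.sqrt 6 ≠ 0 := by positivity
  ext i j
  rw [D]
  simp only [Matrix.mul_diagonal, Matrix.diagonal_mul, Matrix.smul_apply, smul_eq_mul]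
  fin_cases i <;> fin_cases j <;>
    simp only [HK.dv, HK.E1, Omega1, Matrix.of_apply,
      vm0,vm1,vm2,vm3,vm4,vm5,vm6,vm7,vn0,vn1,vn2,vn3,vn4,vn5,vn6,vn7] <;>
    (try norm_num) <;> (try field_simp) <;> nlinarith [h2, h3, h6, m62, m26, m63, m36, m23, m32, h23d, h23q]

set_option maxHeartbeats 4000000 in
lemma hDOD2 : D * Omega2 * D = HK.E2 := by
  have n2 : Real.sqrt 2 ≠ 0 := by positivity
  have n3 : Real.sqrt 3 ≠ 0 := by positivity
  have n6 : Real.sqrt 6 ≠ 0 := by positivity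
  ext i j
  rw [D]
  simp only [Matrix.mul_diagonal, Matrix.diagonal_mul]
  fin_cases i <;> fin_cases j <;>
    simp only [HK.dv, HK.E2, Omega2, Matrix.of_apply,
      vm0,vm1,vm2,vm3,vm4,vm5,vm6,vm7,vn0,vn1,vn2,vn3,vn4,vn5,vn6,vn7] <;>
    (try norm_num) <;> (try field_simp) <;> nlinarith [h2, h3, h6, m62, m26, m63, m36, m23, m32, h23d, h23q]

set_option maxHeartbeats 4000000 in
lemma hDOD3 : D * Omega3 * D = Real.sqrt 3 • HK.E3 := by
  have n2 : Real.sqrt 2 ≠ 0 := by positivity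
  have n3 : Real.sqrt 3 ≠ 0 := by positivity
  have n6 : Real.sqrt 6 ≠ 0 := by positivity
  ext i j
  rw [D]
  simp only [Matrix.mul_diagonal, Matrix.diagonal_mul, Matrix.smul_apply, smul_eq_mul]
  fin_cases i <;> fin_cases j <;>
    simp only [HK.dv, HK.E3, Omega3, Matrix.of_apply,
      vm0,vm1,vm2,vm3,vm4,vm5,vm6,vm7,vn0,vn1,vn2,vn3,vn4,vn5,vn6,vn7] <;>
    (try norm_num) <;> (try field_simp) <;> nlinarith [h2, h3, h6, m62, m26, m63, m36, m23, m32, h23d, h23q]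

set_option maxHeartbeats 4000000 in
lemma hCE1 : HK.C * HK.E1 = HK.F1 := by
  ext i j
  simp only [Matrix.mul_apply, Fin.sum_univ_eight]
  fin_cases i <;> fin_cases j <;>
    simp only [HK.C, HK.E1, HK.F1, Matrix.of_apply,
      vm0,vm1,vm2,vm3,vm4,vm5,vm6,vm7,vn0,vn1,vn2,vn3,vn4,vn5,vn6,vn7] <;>
    norm_num

set_option maxHeartbeats 4000000 in
lemma hFCt1 : HK.F1 * HK.Cᵀ = HK.Q1 := by
  ext i j
  simp only [Matrix.mul_apply, Matrix.transpose_apply, Fin.sum_univ_eight]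
  fin_cases i <;> fin_cases j <;>
    simp only [HK.C, HK.F1, HK.Q1, Matrix.of_apply,
      vm0,vm1,vm2,vm3,vm4,vm5,vm6,vm7,vn0,vn1,vn2,vn3,vn4,vn5,vn6,vn7] <;>
    norm_num

set_option maxHeartbeats 4000000 in
lemma hCE2 : HK.C * HK.E2 = HK.F2 := by
  ext i j
  simp only [Matrix.mul_apply, Fin.sum_univ_eight]
  fin_cases i <;> fin_cases j <;>
    simp only [HK.C, HK.E2, HK.F2, Matrix.of_apply,
      vm0,vm1,vm2,vm3,vm4,vm5,vm6,vm7,vn0,vn1,vn2,vn3,vn4,vn5,vn6,vn7] <;>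
    norm_num

set_option maxHeartbeats 4000000 in
lemma hFCt2 : HK.F2 * HK.Cᵀ = HK.Q2 := by
  ext i j
  simp only [Matrix.mul_apply, Matrix.transpose_apply, Fin.sum_univ_eight]
  fin_cases i <;> fin_cases j <;>
    simp only [HK.C, HK.F2, HK.Q2, Matrix.of_apply,
      vm0,vm1,vm2,vm3,vm4,vm5,vm6,vm7,vn0,vn1,vn2,vn3,vn4,vn5,vn6,vn7] <;>
    norm_num

set_option maxHeartbeats 4000000 in
lemma hCE3 : HK.C * HK.E3 = HK.F3 := by
  ext i j
  simp only [Matrix.mul_apply, Fin.sum_univ_eight]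
  fin_cases i <;> fin_cases j <;>
    simp only [HK.C, HK.E3, HK.F3, Matrix.of_apply,
      vm0,vm1,vm2,vm3,vm4,vm5,vm6,vm7,vn0,vn1,vn2,vn3,vn4,vn5,vn6,vn7] <;>
    norm_num

set_option maxHeartbeats 4000000 in
lemma hFCt3 : HK.F3 * HK.Cᵀ = HK.Q3 := by
  ext i j
  simp only [Matrix.mul_apply, Matrix.transpose_apply, Fin.sum_univ_eight]
  fin_cases i <;> fin_cases j <;>
    simp only [HK.C, HK.F3, HK.Q3, Matrix.of_apply,
      vm0,vm1,vm2,vm3,vm4,vm5,vm6,vm7,vn0,vn1,vn2,vn3,vn4,vn5,vn6,vn7] <;>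
    norm_num

lemma hM1 : B * Omega1 * Bᵀ = Real.sqrt 3 • HK.Q1 := by
  rw [hBCD, Matrix.transpose_mul, D, Matrix.diagonal_transpose, ← D]
  calc HK.C * D * Omega1 * (D * HK.Cᵀ) = HK.C * (D * Omega1 * D) * HK.Cᵀ := by
        simp only [Matrix.mul_assoc]
    _ = HK.C * (Real.sqrt 3 • HK.E1) * HK.Cᵀ := by rw [hDOD1]
    _ = Real.sqrt 3 • (HK.C * HK.E1 * HK.Cᵀ) := by
        rw [Matrix.mul_smul, Matrix.smul_mul]
    _ = Real.sqrt 3 • HK.Q1 := by rw [hCE1, hFCt1]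

lemma hM2 : B * Omega2 * Bᵀ = (1:ℝ) • HK.Q2 := by
  rw [one_smul, hBCD, Matrix.transpose_mul, D, Matrix.diagonal_transpose, ← D]
  calc HK.C * D * Omega2 * (D * HK.Cᵀ) = HK.C * (D * Omega2 * D) * HK.Cᵀ := by
        simp only [Matrix.mul_assoc]
    _ = HK.C * HK.E2 * HK.Cᵀ := by rw [hDOD2]
    _ = HK.Q2 := by rw [hCE2, hFCt2]

lemma hM3 : B * Omega3 * Bᵀ = Real.sqrt 3 • HK.Q3 := by
  rw [hBCD, Matrix.transpose_mul, D, Matrix.diagonal_transpose, ← D]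
  calc HK.C * D * Omega3 * (D * HK.Cᵀ) = HK.C * (D * Omega3 * D) * HK.Cᵀ := by
        simp only [Matrix.mul_assoc]
    _ = HK.C * (Real.sqrt 3 • HK.E3) * HK.Cᵀ := by rw [hDOD3]
    _ = Real.sqrt 3 • (HK.C * HK.E3 * HK.Cᵀ) := by
        rw [Matrix.mul_smul, Matrix.smul_mul]
    _ = Real.sqrt 3 • HK.Q3 := by rw [hCE3, hFCt3]

lemma conj_orth {T : Matrix (Fin 8) (Fin 8) ℝ} (hT : Tᵀ * T = 1) :
    (B⁻¹ * T * B)ᵀ * (B⁻¹ * T * B) = 1 := by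
  rw [Matrix.inv_eq_right_inv hBBt]
  calc (Bᵀ * T * B)ᵀ * (Bᵀ * T * B) = Bᵀ * (Tᵀ * (B * Bᵀ) * T) * B := by
        simp only [Matrix.transpose_mul, Matrix.transpose_transpose, Matrix.mul_assoc]
    _ = Bᵀ * (Tᵀ * T) * B := by rw [hBBt, Matrix.mul_one]
    _ = 1 := by rw [hT, Matrix.mul_one, hBtB]

lemma conj_pres {T Ω Q : Matrix (Fin 8) (Fin 8) ℝ} {c : ℝ}
    (hT : Tᵀ * T = 1) (hM : B * Ω * Bᵀ = c • Q) (hc : Q * T = T * Q) :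
    (B⁻¹ * T * B)ᵀ * Ω * (B⁻¹ * T * B) = Ω := by
  rw [Matrix.inv_eq_right_inv hBBt]
  have hMT : Tᵀ * (B * Ω * Bᵀ * T) = B * Ω * Bᵀ := by
    rw [hM, Matrix.smul_mul, hc, Matrix.mul_smul, ← Matrix.mul_assoc, hT, Matrix.one_mul]
  calc (Bᵀ * T * B)ᵀ * Ω * (Bᵀ * T * B)
      = Bᵀ * (Tᵀ * (B * Ω * Bᵀ * T)) * B := by
        simp only [Matrix.transpose_mul, Matrix.transpose_transpose, Matrix.mul_assoc]
    _ = Bᵀ * (B * Ω * Bᵀ) * B := by rw [hMT]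
    _ = (Bᵀ * B) * Ω * (Bᵀ * B) := by simp only [Matrix.mul_assoc]
    _ = Ω := by rw [hBtB, Matrix.one_mul, Matrix.mul_one]

set_option maxHeartbeats 4000000 in
lemma hT1o : T1ᵀ * T1 = 1 := by
  ext i j
  simp only [Matrix.mul_apply, Matrix.transpose_apply, Fin.sum_univ_eight]
  fin_cases i <;> fin_cases j <;>
    simp only [T1, Matrix.smul_apply, Matrix.of_apply, smul_eq_mul,
      vm0,vm1,vm2,vm3,vm4,vm5,vm6,vm7,vn0,vn1,vn2,vn3,vn4,vn5,vn6,vn7] <;>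
    norm_num [Matrix.one_apply, Fin.ext_iff]

set_option maxHeartbeats 4000000 in
lemma hc11 : HK.Q1 * T1 = T1 * HK.Q1 := by
  ext i j
  simp only [Matrix.mul_apply, Fin.sum_univ_eight]
  fin_cases i <;> fin_cases j <;>
    simp only [T1, HK.Q1, Matrix.smul_apply, Matrix.of_apply, smul_eq_mul,
      vm0,vm1,vm2,vm3,vm4,vm5,vm6,vm7,vn0,vn1,vn2,vn3,vn4,vn5,vn6,vn7] <;>
    norm_num

set_option maxHeartbeats 4000000 in
lemma hc21 : HK.Q2 * T1 = T1 * HK.Q2 := by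
  ext i j
  simp only [Matrix.mul_apply, Fin.sum_univ_eight]
  fin_cases i <;> fin_cases j <;>
    simp only [T1, HK.Q2, Matrix.smul_apply, Matrix.of_apply, smul_eq_mul,
      vm0,vm1,vm2,vm3,vm4,vm5,vm6,vm7,vn0,vn1,vn2,vn3,vn4,vn5,vn6,vn7] <;>
    norm_num

set_option maxHeartbeats 4000000 in
lemma hc31 : HK.Q3 * T1 = T1 * HK.Q3 := by
  ext i j
  simp only [Matrix.mul_apply, Fin.sum_univ_eight]
  fin_cases i <;> fin_cases j <;>
    simp only [T1, HK.Q3, Matrix.smul_apply, Matrix.of_apply, smul_eq_mul,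
      vm0,vm1,vm2,vm3,vm4,vm5,vm6,vm7,vn0,vn1,vn2,vn3,vn4,vn5,vn6,vn7] <;>
    norm_num

set_option maxHeartbeats 4000000 in
lemma hT2o : T2ᵀ * T2 = 1 := by
  ext i j
  simp only [Matrix.mul_apply, Matrix.transpose_apply, Fin.sum_univ_eight]
  fin_cases i <;> fin_cases j <;>
    simp only [T2, Matrix.smul_apply, Matrix.of_apply, smul_eq_mul,
      vm0,vm1,vm2,vm3,vm4,vm5,vm6,vm7,vn0,vn1,vn2,vn3,vn4,vn5,vn6,vn7] <;>
    norm_num [Matrix.one_apply, Fin.ext_iff]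

set_option maxHeartbeats 4000000 in
lemma hc12 : HK.Q1 * T2 = T2 * HK.Q1 := by
  ext i j
  simp only [Matrix.mul_apply, Fin.sum_univ_eight]
  fin_cases i <;> fin_cases j <;>
    simp only [T2, HK.Q1, Matrix.smul_apply, Matrix.of_apply, smul_eq_mul,
      vm0,vm1,vm2,vm3,vm4,vm5,vm6,vm7,vn0,vn1,vn2,vn3,vn4,vn5,vn6,vn7] <;>
    norm_num

set_option maxHeartbeats 4000000 in
lemma hc22 : HK.Q2 * T2 = T2 * HK.Q2 := by
  ext i j
  simp only [Matrix.mul_apply, Fin.sum_univ_eight]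
  fin_cases i <;> fin_cases j <;>
    simp only [T2, HK.Q2, Matrix.smul_apply, Matrix.of_apply, smul_eq_mul,
      vm0,vm1,vm2,vm3,vm4,vm5,vm6,vm7,vn0,vn1,vn2,vn3,vn4,vn5,vn6,vn7] <;>
    norm_num

set_option maxHeartbeats 4000000 in
lemma hc32 : HK.Q3 * T2 = T2 * HK.Q3 := by
  ext i j
  simp only [Matrix.mul_apply, Fin.sum_univ_eight]
  fin_cases i <;> fin_cases j <;>
    simp only [T2, HK.Q3, Matrix.smul_apply, Matrix.of_apply, smul_eq_mul,
      vm0,vm1,vm2,vm3,vm4,vm5,vm6,vm7,vn0,vn1,vn2,vn3,vn4,vn5,vn6,vn7] <;>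
    norm_num

set_option maxHeartbeats 4000000 in
lemma hT3o : T3ᵀ * T3 = 1 := by
  ext i j
  simp only [Matrix.mul_apply, Matrix.transpose_apply, Fin.sum_univ_eight]
  fin_cases i <;> fin_cases j <;>
    simp only [T3, Matrix.smul_apply, Matrix.of_apply, smul_eq_mul,
      vm0,vm1,vm2,vm3,vm4,vm5,vm6,vm7,vn0,vn1,vn2,vn3,vn4,vn5,vn6,vn7] <;>
    norm_num [Matrix.one_apply, Fin.ext_iff]

set_option maxHeartbeats 4000000 in
lemma hc13 : HK.Q1 * T3 = T3 * HK.Q1 := by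
  ext i j
  simp only [Matrix.mul_apply, Fin.sum_univ_eight]
  fin_cases i <;> fin_cases j <;>
    simp only [T3, HK.Q1, Matrix.smul_apply, Matrix.of_apply, smul_eq_mul,
      vm0,vm1,vm2,vm3,vm4,vm5,vm6,vm7,vn0,vn1,vn2,vn3,vn4,vn5,vn6,vn7] <;>
    norm_num

set_option maxHeartbeats 4000000 in
lemma hc23 : HK.Q2 * T3 = T3 * HK.Q2 := by
  ext i j
  simp only [Matrix.mul_apply, Fin.sum_univ_eight]
  fin_cases i <;> fin_cases j <;>
    simp only [T3, HK.Q2, Matrix.smul_apply, Matrix.of_apply, smul_eq_mul,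
      vm0,vm1,vm2,vm3,vm4,vm5,vm6,vm7,vn0,vn1,vn2,vn3,vn4,vn5,vn6,vn7] <;>
    norm_num

set_option maxHeartbeats 4000000 in
lemma hc33 : HK.Q3 * T3 = T3 * HK.Q3 := by
  ext i j
  simp only [Matrix.mul_apply, Fin.sum_univ_eight]
  fin_cases i <;> fin_cases j <;>
    simp only [T3, HK.Q3, Matrix.smul_apply, Matrix.of_apply, smul_eq_mul,
      vm0,vm1,vm2,vm3,vm4,vm5,vm6,vm7,vn0,vn1,vn2,vn3,vn4,vn5,vn6,vn7] <;>
    norm_num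

set_option maxHeartbeats 4000000 in
lemma hT4o : T4ᵀ * T4 = 1 := by
  ext i j
  simp only [Matrix.mul_apply, Matrix.transpose_apply, Fin.sum_univ_eight]
  fin_cases i <;> fin_cases j <;>
    simp only [T4, Matrix.smul_apply, Matrix.of_apply, smul_eq_mul,
      vm0,vm1,vm2,vm3,vm4,vm5,vm6,vm7,vn0,vn1,vn2,vn3,vn4,vn5,vn6,vn7] <;>
    norm_num [Matrix.one_apply, Fin.ext_iff]

set_option maxHeartbeats 4000000 in
lemma hc14 : HK.Q1 * T4 = T4 * HK.Q1 := by
  ext i j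
  simp only [Matrix.mul_apply, Fin.sum_univ_eight]
  fin_cases i <;> fin_cases j <;>
    simp only [T4, HK.Q1, Matrix.smul_apply, Matrix.of_apply, smul_eq_mul,
      vm0,vm1,vm2,vm3,vm4,vm5,vm6,vm7,vn0,vn1,vn2,vn3,vn4,vn5,vn6,vn7] <;>
    norm_num

set_option maxHeartbeats 4000000 in
lemma hc24 : HK.Q2 * T4 = T4 * HK.Q2 := by
  ext i j
  simp only [Matrix.mul_apply, Fin.sum_univ_eight]
  fin_cases i <;> fin_cases j <;>
    simp only [T4, HK.Q2, Matrix.smul_apply, Matrix.of_apply, smul_eq_mul,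
      vm0,vm1,vm2,vm3,vm4,vm5,vm6,vm7,vn0,vn1,vn2,vn3,vn4,vn5,vn6,vn7] <;>
    norm_num

set_option maxHeartbeats 4000000 in
lemma hc34 : HK.Q3 * T4 = T4 * HK.Q3 := by
  ext i j
  simp only [Matrix.mul_apply, Fin.sum_univ_eight]
  fin_cases i <;> fin_cases j <;>
    simp only [T4, HK.Q3, Matrix.smul_apply, Matrix.of_apply, smul_eq_mul,
      vm0,vm1,vm2,vm3,vm4,vm5,vm6,vm7,vn0,vn1,vn2,vn3,vn4,vn5,vn6,vn7] <;>
    norm_num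

end HKAux
/-- For each generator `T` of `G₂`, the conjugated matrix
`A = B⁻¹ * T * B` is orthogonal and preserves the standard hyperKähler triple
`Ω₁, Ω₂, Ω₃`; hence `B⁻¹ · G₂ · B ⊆ Sp(2) ⊂ SO(8)`, i.e. `G₂` preserves a
hyperKähler structure on ℝ⁸. -/
theorem conjugated_generators_preserve_hyperkahler_triple :
    ∀ T ∈ ({T1, T2, T3, T4} : Set (Matrix (Fin 8) (Fin 8) ℝ)),
      (B⁻¹ * T * B)ᵀ * (B⁻¹ * T * B) = 1 ∧
      (B⁻¹ * T * B)ᵀ * Omega1 * (B⁻¹ * T * B) = Omega1 ∧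
      (B⁻¹ * T * B)ᵀ * Omega2 * (B⁻¹ * T * B) = Omega2 ∧
      (B⁻¹ * T * B)ᵀ * Omega3 * (B⁻¹ * T * B) = Omega3 := by
  intro T hT
  simp only [Set.mem_insert_iff, Set.mem_singleton_iff] at hT
  rcases hT with rfl | rfl | rfl | rfl
  · exact ⟨HKAux.conj_orth HKAux.hT1o,
      HKAux.conj_pres HKAux.hT1o HKAux.hM1 HKAux.hc11,
      HKAux.conj_pres HKAux.hT1o HKAux.hM2 HKAux.hc21,
      HKAux.conj_pres HKAux.hT1o HKAux.hM3 HKAux.hc31⟩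
  · exact ⟨HKAux.conj_orth HKAux.hT2o,
      HKAux.conj_pres HKAux.hT2o HKAux.hM1 HKAux.hc12,
      HKAux.conj_pres HKAux.hT2o HKAux.hM2 HKAux.hc22,
      HKAux.conj_pres HKAux.hT2o HKAux.hM3 HKAux.hc32⟩
  · exact ⟨HKAux.conj_orth HKAux.hT3o,
      HKAux.conj_pres HKAux.hT3o HKAux.hM1 HKAux.hc13,
      HKAux.conj_pres HKAux.hT3o HKAux.hM2 HKAux.hc23,
      HKAux.conj_pres HKAux.hT3o HKAux.hM3 HKAux.hc33⟩
  · exact ⟨HKAux.conj_orth HKAux.hT4o,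
      HKAux.conj_pres HKAux.hT4o HKAux.hM1 HKAux.hc14,
      HKAux.conj_pres HKAux.hT4o HKAux.hM2 HKAux.hc24,
      HKAux.conj_pres HKAux.hT4o HKAux.hM3 HKAux.hc34⟩
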